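/- There exists a constant c > 0 such that for all real X, Y with 3/2 ≤ X ≤ Y and all q ∈ ℕ with q ≥ 1, one has ∫_{−∞}^{∞} |v_q(γ)|² dγ ≤ c·X·Y/q. -/

import Mathlib

/-!
Each summand satisfies `(sin (N x u) / (x u))² ≤ 2 N² / (1 + (N x u)²)`, a Lorentzian of
integral `2 π N / |x|`. Cauchy–Schwarz with weights `|x| ^ (-1/2)` turns this into
`∫ (∑ₓ sin (N x u) / (x u))² du ≤ 2 π N (∑_{0 < |x| ≤ M} |x| ^ (-1/2))² ≤ 32 π N M`,
and the substitution `u = π γ` with `N = 2⌊Y⌋ + 1 ≤ 3 Y`, `M = ⌊X / q⌋` gives `O(X Y / q)`.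
-/

open Real

/-- `v_q(γ) = ∑_{0 < |x| ≤ X/q} sin(π(2⌊Y⌋+1)γx)/(πγx)`, each summand read as
`2⌊Y⌋+1` when `γ = 0`. -/
noncomputable def v (X Y : ℝ) (q : ℕ) (γ : ℝ) : ℝ :=
  ∑ x ∈ (Finset.Icc (-⌊X / (q : ℝ)⌋) ⌊X / (q : ℝ)⌋).erase 0,
    if γ = 0 then 2 * (⌊Y⌋ : ℝ) + 1
    else Real.sin (Real.pi * (2 * (⌊Y⌋ : ℝ) + 1) * γ * x) / (Real.pi * γ * x)

open MeasureTheory Finset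

lemma sq_sin_mul_div_le (N t : ℝ) :
    (sin (N * t) / t) ^ 2 ≤ 2 * N ^ 2 / (1 + (N * t) ^ 2) := by
  rcases eq_or_ne t 0 with rfl | ht
  · simp [sq_nonneg]
  have hsin : sin (N * t) ^ 2 ≤ (N * t) ^ 2 := sq_le_sq.2 (abs_sin_le_abs)
  rw [div_pow, div_le_div_iff₀ (by positivity) (by positivity)]
  -- `sin² ≤ (N t)²` and `sin² ≤ 1` bound the two terms of `sin² · (1 + (N t)²)`
  nlinarith [sin_sq_le_one (N * t)]

lemma integrable_two_mul_sq_div_one_add_sq (N a : ℝ) (hNa : N * a ≠ 0) :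
    Integrable fun γ : ℝ ↦ 2 * N ^ 2 / (1 + (N * (a * γ)) ^ 2) := by
  simp_rw [div_eq_mul_inv, ← mul_assoc N]
  exact (integrable_inv_one_add_sq.comp_mul_left' hNa).const_mul _

lemma integral_two_mul_sq_div_one_add_sq (N a : ℝ) (hN : 0 < N) :
    ∫ γ : ℝ, 2 * N ^ 2 / (1 + (N * (a * γ)) ^ 2) = 2 * π * N / |a| := by
  simp_rw [div_eq_mul_inv, ← mul_assoc N]
  rw [integral_const_mul, Measure.integral_comp_mul_left (fun u ↦ (1 + u ^ 2)⁻¹),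
    integral_univ_inv_one_add_sq, smul_eq_mul, abs_inv, abs_mul, abs_of_pos hN]
  field_simp

lemma integral_sq_sum_sin_mul_div_le {ι : Type*} (s : Finset ι) (a : ι → ℝ)
    (ha : ∀ i ∈ s, a i ≠ 0) {N : ℝ} (hN : 0 < N) :
    ∫ γ : ℝ, (∑ i ∈ s, sin (N * (a i * γ)) / (a i * γ)) ^ 2
      ≤ 2 * π * N * (∑ i ∈ s, (√|a i|)⁻¹) ^ 2 := by
  set G : ℝ → ℝ := fun γ ↦
    (∑ i ∈ s, (√|a i|)⁻¹) * ∑ i ∈ s, √|a i| * (2 * N ^ 2 / (1 + (N * (a i * γ)) ^ 2))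
  have hsqrt : ∀ i ∈ s, 0 < √|a i| := fun i hi ↦ sqrt_pos.2 (abs_pos.2 (ha i hi))
  have hG : Integrable G := by
    refine (integrable_finsetSum s fun i hi ↦ ?_).const_mul _
    exact (integrable_two_mul_sq_div_one_add_sq N (a i)
      (mul_ne_zero hN.ne' (ha i hi))).const_mul _
  have hpoint : ∀ γ, (∑ i ∈ s, sin (N * (a i * γ)) / (a i * γ)) ^ 2 ≤ G γ := by
    intro γ
    -- Cauchy–Schwarz with weights `|a i| ^ (-1/2)`, which balance the `1 / |a i|` decay
    refine (sum_sq_le_sum_mul_sum_of_sq_le_mul s (g := fun i ↦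
        √|a i| * (sin (N * (a i * γ)) / (a i * γ)) ^ 2)
      (fun i hi ↦ (inv_pos.2 (hsqrt i hi)).le) (fun i hi ↦ by positivity)
      (fun i hi ↦ (inv_mul_cancel_left₀ (hsqrt i hi).ne' _).ge)).trans ?_
    simp only [G]
    gcongr with i hi
    exact sq_sin_mul_div_le N _
  have hGint : ∫ γ, G γ = 2 * π * N * (∑ i ∈ s, (√|a i|)⁻¹) ^ 2 := by
    simp only [G]
    rw [integral_const_mul, integral_finsetSum s fun i hi ↦
      (integrable_two_mul_sq_div_one_add_sq N (a i) (mul_ne_zero hN.ne' (ha i hi))).const_mul _]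
    simp_rw [integral_const_mul, integral_two_mul_sq_div_one_add_sq N _ hN,
      mul_div_left_comm _ _ |_|, ← mul_div_assoc, mul_div_assoc _ (√_), sqrt_div_self, ← mul_sum]
    ring
  exact hGint ▸ integral_mono_of_nonneg (.of_forall fun _ ↦ sq_nonneg _) hG (.of_forall hpoint)

lemma inv_sqrt_add_one_le {r : ℝ} (hr : 0 ≤ r) : (√(r + 1))⁻¹ ≤ 2 * (√(r + 1) - √r) := by
  have hpos : 0 < √(r + 1) := sqrt_pos.2 (by linarith)
  have hsq : √(r + 1) ^ 2 = r + 1 := sq_sqrt (by linarith)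
  have hsq' : √r ^ 2 = r := sq_sqrt hr
  rw [inv_eq_one_div, div_le_iff₀ hpos]
  nlinarith [sq_nonneg (√(r + 1) - √r), sqrt_nonneg r]

lemma sum_inv_sqrt_abs_le {M : ℤ} (hM : 0 ≤ M) :
    ∑ x ∈ (Icc (-M) M).erase 0, (√|(x : ℝ)|)⁻¹ ≤ 4 * √(M : ℝ) := by
  induction M, hM using Int.leInduction with
  | base => simp
  | succ M hM ih =>
    have hset : (Icc (-(M + 1)) (M + 1)).erase 0 =
        insert (-(M + 1)) (insert (M + 1) ((Icc (-M) M).erase 0)) := by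
      ext x; simp only [mem_erase, mem_Icc, mem_insert]; omega
    have hM' : (0 : ℝ) ≤ M := by exact_mod_cast hM
    rw [hset, sum_insert (by simp; omega), sum_insert (by simp)]
    push_cast
    rw [abs_neg, abs_of_pos (by linarith)]
    linarith [inv_sqrt_add_one_le hM']

lemma v_eq_sum (X Y : ℝ) (q : ℕ) {γ : ℝ} (hγ : γ ≠ 0) :
    v X Y q γ = ∑ x ∈ (Icc (-⌊X / q⌋) ⌊X / q⌋).erase 0,
      sin ((2 * ⌊Y⌋ + 1) * (x * (π * γ))) / (x * (π * γ)) := by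
  refine sum_congr rfl fun x _ ↦ ?_
  rw [if_neg hγ]
  ring_nf

theorem stmt13 :
    ∃ c > 0, ∀ X Y : ℝ, ∀ q : ℕ, 3 / 2 ≤ X → X ≤ Y → 1 ≤ q →
      ∫ γ : ℝ, (v X Y q γ) ^ 2 ≤ c * X * Y / q := by
  refine ⟨96, by norm_num, fun X Y q hX hXY hq ↦ ?_⟩
  set M := ⌊X / q⌋
  set N : ℝ := 2 * ⌊Y⌋ + 1
  have hq' : (0 : ℝ) < q := by exact_mod_cast hq
  have hM : 0 ≤ M := Int.floor_nonneg.2 (by positivity)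
  have hMX : (M : ℝ) ≤ X / q := Int.floor_le _
  have hY : (1 : ℝ) ≤ ⌊Y⌋ := by exact_mod_cast Int.le_floor.2 (by push_cast; linarith)
  have hN : 0 < N := by positivity
  have hNY : N ≤ 3 * Y := by linarith [Int.floor_le Y]
  have hY0 : 0 ≤ Y := by linarith
  have hsubst : ∫ γ, v X Y q γ ^ 2 = π⁻¹ * ∫ u, (∑ x ∈ (Icc (-M) M).erase 0,
      sin (N * (x * u)) / (x * u)) ^ 2 := by
    rw [← abs_of_pos (inv_pos.2 pi_pos), ← smul_eq_mul, ← Measure.integral_comp_mul_left]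
    refine integral_congr_ae ?_
    filter_upwards [Measure.ae_ne volume 0] with γ hγ
    rw [v_eq_sum X Y q hγ]
  calc ∫ γ, v X Y q γ ^ 2
      ≤ π⁻¹ * (2 * π * N * (∑ x ∈ (Icc (-M) M).erase 0, (√|(x : ℝ)|)⁻¹) ^ 2) := by
        rw [hsubst]
        gcongr
        exact integral_sq_sum_sin_mul_div_le _ _ (fun x hx ↦ by simpa using (mem_erase.1 hx).1) hN
    _ ≤ π⁻¹ * (2 * π * N * (4 * √(M : ℝ)) ^ 2) := by
        gcongr
        exact sum_inv_sqrt_abs_le hM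
    _ = 32 * N * M := by
        rw [mul_pow, sq_sqrt (by exact_mod_cast hM)]
        field_simp
        ring
    _ ≤ 32 * (3 * Y) * (X / q) := by gcongr
    _ = 96 * X * Y / q := by ring
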